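/- arXiv:1803.09113 — 2 statements merged into one kernel-verified Lean document; each statement's English description precedes it below -/
import Mathlib

section
/- Let F ⊂ ℝ^d be a self-conformal set (the attractor of a conformal iterated function system on a bounded open convex set Ω ⊂ ℝ^d). If F satisfies the identity limit criterion, then F satisfies the weak separation condition. -/
open MeasureTheory Set
open scoped ENNReal NNReal

noncomputable section

/-- The `s`-dimensional Hausdorff content: the infimum of `∑ diam(Uᵢ)^s` over all countable
covers of `A`. -/
def hContent {X : Type*} [PseudoEMetricSpace X] (s : ℝ) (A : Set X) : ℝ≥0∞ :=
  ⨅ (U : ℕ → Set X) (_ : A ⊆ ⋃ n, U n), ∑' n, EMetric.diam (U n) ^ s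

/-- The least number of closed balls of radius `r` (with arbitrary centers) needed to cover `A`. -/
def coverNum {X : Type*} [PseudoMetricSpace X] (A : Set X) (r : ℝ) : ℕ :=
  sInf {k : ℕ | ∃ t : Finset X, t.card = k ∧ A ⊆ ⋃ x ∈ t, Metric.closedBall x r}

/-- `A` is Ahlfors `s`-regular: there are a Radon measure `μ` supported on `A` and a constant
`C ≥ 1` with `C⁻¹ r^s ≤ μ(B(x,r)) ≤ C r^s` for all `x ∈ A` and `0 < r < diam A`. -/
def IsAhlforsRegular {X : Type*} [MetricSpace X] [MeasurableSpace X] (A : Set X) (s : ℝ) :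
    Prop :=
  ∃ (μ : Measure X) (C : ℝ), 1 ≤ C ∧ μ.Regular ∧ μ Aᶜ = 0 ∧
    ∀ x ∈ A, ∀ r : ℝ, 0 < r → r < Metric.diam A →
      ENNReal.ofReal (C⁻¹ * r ^ s) ≤ μ (Metric.closedBall x r) ∧
      μ (Metric.closedBall x r) ≤ ENNReal.ofReal (C * r ^ s)

/-- The Assouad dimension of a set `E`. -/
def assouadDim {X : Type*} [PseudoMetricSpace X] (E : Set X) : ℝ :=
  sInf {s : ℝ | 0 ≤ s ∧ ∃ C : ℝ, 1 ≤ C ∧ ∀ x ∈ E, ∀ r R : ℝ, 0 < r → r < R →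
    ∃ T : Set X, T ⊆ E ∧ T.Finite ∧ (T.ncard : ℝ) ≤ C * (R / r) ^ s ∧
      E ∩ Metric.closedBall x R ⊆ ⋃ y ∈ T, Metric.closedBall y r}

/-- A conformal iterated function system on a bounded open convex set `Ω`: `N ≥ 2` injective
conformal contractions `φ i : Ω → X` with `closure (φ i '' Ω) ⊆ Ω` and `‖φ i'‖ < 1`. -/
structure CIFS (X : Type*) [NormedAddCommGroup X] [NormedSpace ℝ X] (N : ℕ) (Ω : Set X) where
  two_le : 2 ≤ N
  isOpen : IsOpen Ω
  isBounded : Bornology.IsBounded Ω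
  convex : Convex ℝ Ω
  nonempty : Ω.Nonempty
  φ : Fin N → X → X
  injOn : ∀ i, Set.InjOn (φ i) Ω
  diffAt : ∀ i, ∀ x ∈ Ω, DifferentiableAt ℝ (φ i) x
  conformal : ∀ i, ∀ x ∈ Ω, ∀ v : X, ‖fderiv ℝ (φ i) x v‖ = ‖fderiv ℝ (φ i) x‖ * ‖v‖
  fderiv_ne : ∀ i, ∀ x ∈ Ω, fderiv ℝ (φ i) x ≠ 0
  holder : ∀ i, ∃ α c : ℝ, 0 < α ∧ 0 < c ∧ ∀ x ∈ Ω, ∀ y ∈ Ω,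
    ‖fderiv ℝ (φ i) x - fderiv ℝ (φ i) y‖ ≤ c * ‖x - y‖ ^ α
  mapsInto : ∀ i, closure (φ i '' Ω) ⊆ Ω
  contract : ∀ i, ∃ s : ℝ, s < 1 ∧ ∀ x ∈ Ω, ‖fderiv ℝ (φ i) x‖ ≤ s

namespace CIFS

variable {X : Type*} [NormedAddCommGroup X] [NormedSpace ℝ X] {N : ℕ} {Ω : Set X}

/-- The map `φ_𝚒 = φ_{i₁} ∘ ⋯ ∘ φ_{iₙ}` associated to a finite word `𝚒 = i₁⋯iₙ`
(the empty word gives the identity). -/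
def wmap (S : CIFS X N Ω) (w : List (Fin N)) : X → X :=
  w.foldr (fun i f => S.φ i ∘ f) id

/-- `‖φ_𝚒'‖ = sup_{x ∈ Ω} |φ_𝚒'(x)|`. -/
def dnorm (S : CIFS X N Ω) (w : List (Fin N)) : ℝ :=
  sSup {t : ℝ | ∃ x ∈ Ω, t = ‖fderiv ℝ (S.wmap w) x‖}

/-- `F` is the attractor (self-conformal set) of the system: the nonempty compact subset of `Ω`
with `F = ⋃ i, φ i '' F`. -/
def IsAttractor (S : CIFS X N Ω) (F : Set X) : Prop :=
  F.Nonempty ∧ IsCompact F ∧ F ⊆ Ω ∧ F = ⋃ i, S.φ i '' F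

/-- The family `Φ(x,r)` of restrictions `φ_𝚒|_F` over nonempty words `𝚒` with
`diam (φ_𝚒 F) ≤ r < diam (φ_{𝚒⁻} F)` and `φ_𝚒(F) ∩ B(x,r) ≠ ∅`. -/
def Phi (S : CIFS X N Ω) (F : Set X) (x : X) (r : ℝ) : Set (↥F → X) :=
  {g | ∃ w : List (Fin N), w ≠ [] ∧
    Metric.diam (S.wmap w '' F) ≤ r ∧
    r < Metric.diam (S.wmap w.dropLast '' F) ∧
    (S.wmap w '' F ∩ Metric.closedBall x r).Nonempty ∧
    g = F.restrict (S.wmap w)}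

/-- The weak separation condition: `sup {#Φ(x,r) : x ∈ F, r > 0} < ∞`. -/
def WSC (S : CIFS X N Ω) (F : Set X) : Prop :=
  ∃ M : ℕ, ∀ x ∈ F, ∀ r : ℝ, 0 < r → (S.Phi F x r).Finite ∧ (S.Phi F x r).ncard ≤ M

/-- `sup_{x ∈ F} |φ_𝚒(x) − φ_𝚓(x)|`. -/
def sep (S : CIFS X N Ω) (F : Set X) (w v : List (Fin N)) : ℝ :=
  ⨆ x : ↥F, dist (S.wmap w (x : X)) (S.wmap v (x : X))

/-- The identity limit criterion:
`inf { ‖φ_𝚒'‖⁻¹ ⬝ sup_{x∈F} |φ_𝚒(x) − φ_𝚓(x)| : φ_𝚒|_F ≠ φ_𝚓|_F } > 0`. -/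
def ILC (S : CIFS X N Ω) (F : Set X) : Prop :=
  ∃ ε : ℝ, 0 < ε ∧ ∀ w v : List (Fin N),
    F.restrict (S.wmap w) ≠ F.restrict (S.wmap v) →
    ε * S.dnorm w ≤ S.sep F w v

end CIFS

/-!
Bounded distortion of the conformal maps gives `‖φ_𝚒'‖ ≳ r` for every word `𝚒` of `Φ(x,r)`, since
`r < diam φ_{𝚒⁻}(F) ≲ ‖φ_{𝚒⁻}'‖ ≲ ‖φ_𝚒'‖`. By the ILC two different maps of `Φ(x,r)` are then
`≳ r` apart in the sup norm on `F`, and, being `‖φ_𝚒'‖`-Lipschitz, already at some point of a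
finite net `P` of `F` fixed once and for all. Restricted to `P`, the maps of `Φ(x,r)` are thus
`≳ r`-separated points of a ball of radius `2r` in the fixed finite-dimensional space `P → ℝ^d`,
and there are boundedly many of those, independently of `x` and `r`.
-/

open Metric Set

theorem ContinuousLinearMap.opNorm_comp_eq_mul_of_norm_apply {E F G : Type*}
    [NormedAddCommGroup E] [NormedSpace ℝ E] [NormedAddCommGroup F] [NormedSpace ℝ F]
    [NormedAddCommGroup G] [NormedSpace ℝ G] (A : F →L[ℝ] G) (B : E →L[ℝ] F)
    (hA : ∀ v, ‖A v‖ = ‖A‖ * ‖v‖) : ‖A.comp B‖ = ‖A‖ * ‖B‖ := by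
  refine le_antisymm (A.opNorm_comp_le B) ?_
  rcases (norm_nonneg A).eq_or_lt with hA0 | hA0
  · rw [← hA0, zero_mul]
    exact norm_nonneg _
  · have hB : ‖B‖ ≤ ‖A.comp B‖ / ‖A‖ := by
      refine B.opNorm_le_bound (by positivity) fun v => ?_
      rw [div_mul_eq_mul_div, le_div_iff₀ hA0, mul_comm, ← hA]
      exact (A.comp B).le_opNorm v
    rwa [le_div_iff₀ hA0, mul_comm] at hB

theorem exists_finite_forall_mem_closedBall_exists_dist_lt {E : Type*}
    [NormedAddCommGroup E] [NormedSpace ℝ E] [ProperSpace E] {δ : ℝ} (hδ : 0 < δ) :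
    ∃ Q : Set E, Q.Finite ∧ ∀ (x : E) (R : ℝ), 0 < R →
      ∀ y ∈ closedBall x R, ∃ q ∈ Q, dist y (x + R • q) < δ * R := by
  obtain ⟨Q, -, hQfin, hQ⟩ := (isCompact_closedBall (0 : E) 1).finite_cover_balls hδ
  refine ⟨Q, hQfin, fun x R hR y hy => ?_⟩
  have hy' : R⁻¹ • (y - x) ∈ closedBall (0 : E) 1 := by
    rw [mem_closedBall_zero_iff, norm_smul, norm_inv, Real.norm_of_nonneg hR.le,
      inv_mul_le_one₀ hR, ← dist_eq_norm]
    exact hy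
  obtain ⟨q, hq, hyq⟩ := mem_iUnion₂.1 (hQ hy')
  refine ⟨q, hq, ?_⟩
  have hscale : y - (x + R • q) = R • (R⁻¹ • (y - x) - q) := by
    rw [smul_sub, smul_inv_smul₀ hR.ne']
    abel
  rw [dist_eq_norm, hscale, norm_smul, Real.norm_of_nonneg hR.le, ← dist_eq_norm,
    mul_comm δ]
  exact mul_lt_mul_of_pos_left (mem_ball.1 hyq) hR

theorem exists_ncard_le_of_pairwise_le_dist {ι E : Type*} [NormedAddCommGroup E]
    [NormedSpace ℝ E] [ProperSpace E] {κ : ℝ} (hκ : 0 < κ) :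
    ∃ M : ℕ, ∀ (f : ι → E) (s : Set ι) (x : E) (R : ℝ), 0 < R → MapsTo f s (closedBall x R) →
      s.Pairwise (fun i j => κ * R ≤ dist (f i) (f j)) → s.Finite ∧ s.ncard ≤ M := by
  obtain ⟨Q, hQfin, hQ⟩ :=
    exists_finite_forall_mem_closedBall_exists_dist_lt (E := E) (half_pos hκ)
  refine ⟨Q.ncard, fun f s x R hR hfs hsep => ?_⟩
  have hcover : ∀ i ∈ s, ∃ q ∈ Q, dist (f i) (x + R • q) < κ / 2 * R := fun i hi =>
    hQ x R hR _ (hfs hi)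
  choose! q hqQ hq using hcover
  have hinj : InjOn q s := by
    intro i hi j hj hij
    by_contra hne
    have hfar := hsep hi hj hne
    have hnear := dist_triangle_right (f i) (f j) (x + R • q j)
    have hi' := hq i hi
    rw [hij] at hi'
    linarith [hq j hj]
  exact ⟨hQfin.of_injOn hqQ hinj, ncard_le_ncard_of_injOn q hqQ hinj hQfin⟩

namespace CIFS

variable {X : Type*} [NormedAddCommGroup X] [NormedSpace ℝ X] {N : ℕ} {Ω : Set X}
variable (S : CIFS X N Ω)

theorem nontrivial (S : CIFS X N Ω) : Nontrivial X := by
  obtain ⟨x, hx⟩ := S.nonempty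
  by_contra hX
  rw [not_nontrivial_iff_subsingleton] at hX
  exact S.fderiv_ne ⟨0, by linarith [S.two_le]⟩ x hx (Subsingleton.elim _ _)

theorem wmap_cons (i : Fin N) (u : List (Fin N)) : S.wmap (i :: u) = S.φ i ∘ S.wmap u := rfl

theorem wmap_singleton (i : Fin N) : S.wmap [i] = S.φ i := rfl

theorem wmap_append (u v : List (Fin N)) : S.wmap (u ++ v) = S.wmap u ∘ S.wmap v := by
  induction u with
  | nil => rfl
  | cons i u ih => rw [List.cons_append, wmap_cons, ih]; rfl

theorem mapsTo_wmap {K : Set X} (hK : ∀ i, MapsTo (S.φ i) K K) (w : List (Fin N)) :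
    MapsTo (S.wmap w) K K := by
  induction w with
  | nil => exact mapsTo_id K
  | cons i u ih => exact (hK i).comp ih

theorem mapsTo_φ (i : Fin N) : MapsTo (S.φ i) Ω Ω :=
  fun _ hx => S.mapsInto i (subset_closure (mem_image_of_mem _ hx))

theorem wmap_mem (w : List (Fin N)) {x : X} (hx : x ∈ Ω) : S.wmap w x ∈ Ω :=
  S.mapsTo_wmap S.mapsTo_φ w hx

theorem differentiableAt_wmap (w : List (Fin N)) {x : X} (hx : x ∈ Ω) :
    DifferentiableAt ℝ (S.wmap w) x := by
  induction w with
  | nil => exact differentiableAt_id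
  | cons i u ih => exact (S.diffAt i _ (S.wmap_mem u hx)).comp x ih

theorem fderiv_wmap_append (u v : List (Fin N)) {x : X} (hx : x ∈ Ω) :
    fderiv ℝ (S.wmap (u ++ v)) x
      = (fderiv ℝ (S.wmap u) (S.wmap v x)).comp (fderiv ℝ (S.wmap v) x) := by
  rw [wmap_append]
  exact fderiv_comp x (S.differentiableAt_wmap u (S.wmap_mem v hx))
    (S.differentiableAt_wmap v hx)

theorem fderiv_wmap_cons (i : Fin N) (u : List (Fin N)) {x : X} (hx : x ∈ Ω) :
    fderiv ℝ (S.wmap (i :: u)) x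
      = (fderiv ℝ (S.φ i) (S.wmap u x)).comp (fderiv ℝ (S.wmap u) x) :=
  S.fderiv_wmap_append [i] u hx

theorem norm_fderiv_wmap_apply (w : List (Fin N)) {x : X} (hx : x ∈ Ω) (v : X) :
    ‖fderiv ℝ (S.wmap w) x v‖ = ‖fderiv ℝ (S.wmap w) x‖ * ‖v‖ := by
  have := S.nontrivial
  induction w with
  | nil => simp [wmap]
  | cons i u ih =>
    have hux := S.wmap_mem u hx
    rw [S.fderiv_wmap_cons i u hx, ContinuousLinearMap.comp_apply,
      ContinuousLinearMap.opNorm_comp_eq_mul_of_norm_apply _ _ (S.conformal i _ hux),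
      S.conformal i _ hux, ih, mul_assoc]

theorem norm_fderiv_wmap_append (u v : List (Fin N)) {x : X} (hx : x ∈ Ω) :
    ‖fderiv ℝ (S.wmap (u ++ v)) x‖
      = ‖fderiv ℝ (S.wmap u) (S.wmap v x)‖ * ‖fderiv ℝ (S.wmap v) x‖ := by
  rw [S.fderiv_wmap_append u v hx, ContinuousLinearMap.opNorm_comp_eq_mul_of_norm_apply _ _
    (S.norm_fderiv_wmap_apply u (S.wmap_mem v hx))]

theorem norm_fderiv_wmap_cons (i : Fin N) (u : List (Fin N)) {x : X} (hx : x ∈ Ω) :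
    ‖fderiv ℝ (S.wmap (i :: u)) x‖
      = ‖fderiv ℝ (S.φ i) (S.wmap u x)‖ * ‖fderiv ℝ (S.wmap u) x‖ :=
  S.norm_fderiv_wmap_append [i] u hx

theorem exists_lt_one_forall_norm_fderiv_le :
    ∃ s : ℝ, 0 ≤ s ∧ s < 1 ∧ ∀ i, ∀ x ∈ Ω, ‖fderiv ℝ (S.φ i) x‖ ≤ s := by
  choose t ht1 ht using S.contract
  obtain ⟨M, hM⟩ := Finite.exists_le fun i => (⟨t i, ht1 i⟩ : Iio (1 : ℝ))
  exact ⟨max M 0, le_max_right _ _, max_lt M.2 one_pos,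
    fun i x hx => (ht i x hx).trans <| (Subtype.coe_le_coe.2 (hM i)).trans (le_max_left _ _)⟩

theorem norm_fderiv_wmap_le_pow {s : ℝ} (hs0 : 0 ≤ s)
    (hs : ∀ i, ∀ x ∈ Ω, ‖fderiv ℝ (S.φ i) x‖ ≤ s) (w : List (Fin N)) {x : X} (hx : x ∈ Ω) :
    ‖fderiv ℝ (S.wmap w) x‖ ≤ s ^ w.length := by
  have := S.nontrivial
  induction w with
  | nil => simp [wmap]
  | cons i u ih =>
    rw [S.norm_fderiv_wmap_cons i u hx, List.length_cons, pow_succ']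
    exact mul_le_mul (hs i _ (S.wmap_mem u hx)) ih (norm_nonneg _) hs0

theorem norm_fderiv_wmap_le_dnorm (w : List (Fin N)) {x : X} (hx : x ∈ Ω) :
    ‖fderiv ℝ (S.wmap w) x‖ ≤ S.dnorm w := by
  obtain ⟨s, hs0, -, hs⟩ := S.exists_lt_one_forall_norm_fderiv_le
  refine le_csSup ⟨s ^ w.length, ?_⟩ ⟨x, hx, rfl⟩
  rintro t ⟨y, hy, rfl⟩
  exact S.norm_fderiv_wmap_le_pow hs0 hs w hy

theorem dnorm_nonneg (w : List (Fin N)) : 0 ≤ S.dnorm w :=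
  (norm_nonneg _).trans (S.norm_fderiv_wmap_le_dnorm w S.nonempty.some_mem)

theorem dnorm_le {w : List (Fin N)} {C : ℝ} (hC : ∀ x ∈ Ω, ‖fderiv ℝ (S.wmap w) x‖ ≤ C) :
    S.dnorm w ≤ C := by
  obtain ⟨x, hx⟩ := S.nonempty
  exact csSup_le ⟨_, x, hx, rfl⟩ fun t ⟨y, hy, ht⟩ => ht ▸ hC y hy

theorem dist_wmap_le (w : List (Fin N)) {x y : X} (hx : x ∈ Ω) (hy : y ∈ Ω) :
    dist (S.wmap w x) (S.wmap w y) ≤ S.dnorm w * dist x y := by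
  rw [dist_eq_norm, dist_eq_norm]
  exact S.convex.norm_image_sub_le_of_norm_fderiv_le (fun _ hz => S.differentiableAt_wmap w hz)
    (fun _ hz => S.norm_fderiv_wmap_le_dnorm w hz) hy hx

theorem diam_image_wmap_le {F : Set X} (hFΩ : F ⊆ Ω) (w : List (Fin N)) :
    diam (S.wmap w '' F) ≤ S.dnorm w * diam F := by
  refine diam_le_of_forall_dist_le (mul_nonneg (S.dnorm_nonneg w) diam_nonneg) ?_
  rintro _ ⟨p, hp, rfl⟩ _ ⟨q, hq, rfl⟩
  exact (S.dist_wmap_le w (hFΩ hp) (hFΩ hq)).trans (mul_le_mul_of_nonneg_left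
    (dist_le_diam_of_mem (S.isBounded.subset hFΩ) hp hq) (S.dnorm_nonneg w))

theorem continuousOn_fderiv (i : Fin N) : ContinuousOn (fderiv ℝ (S.φ i)) Ω := by
  obtain ⟨α, c, hα, -, hc⟩ := S.holder i
  intro x hx
  rw [ContinuousWithinAt, tendsto_iff_norm_sub_tendsto_zero]
  refine squeeze_zero' (Filter.Eventually.of_forall fun _ => norm_nonneg _)
    (eventually_nhdsWithin_of_forall fun y hy => hc y hy x hx) ?_
  have hcont : ContinuousAt (fun y => c * ‖y - x‖ ^ α) x := by
    fun_prop (disch := exact Or.inr hα.le)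
  simpa [Real.zero_rpow hα.ne'] using hcont.tendsto.mono_left nhdsWithin_le_nhds

theorem exists_pos_forall_le_norm_fderiv {K : Set X} (hK : IsCompact K) (hKΩ : K ⊆ Ω) :
    ∃ m : ℝ, 0 < m ∧ ∀ i, ∀ x ∈ K, m ≤ ‖fderiv ℝ (S.φ i) x‖ := by
  have hbound : ∀ i, ∃ m : ℝ, 0 < m ∧ ∀ x ∈ K, m ≤ ‖fderiv ℝ (S.φ i) x‖ := fun i =>
    hK.exists_forall_le' ((S.continuousOn_fderiv i).norm.mono hKΩ)
      fun x hx => norm_pos_iff.2 (S.fderiv_ne i x (hKΩ hx))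
  choose m hm hmK using hbound
  obtain ⟨M, hM⟩ := Finite.exists_ge fun i => (⟨m i, hm i⟩ : Ioi (0 : ℝ))
  exact ⟨M, M.2, fun i x hx => (Subtype.coe_le_coe.2 (hM i)).trans (hmK i x hx)⟩

theorem exists_isCompact_mapsTo [ProperSpace X] :
    ∃ K : Set X, IsCompact K ∧ K.Nonempty ∧ K ⊆ Ω ∧ ∀ i, MapsTo (S.φ i) K K := by
  have i₀ : Fin N := ⟨0, by linarith [S.two_le]⟩
  have hKΩ : (⋃ i, closure (S.φ i '' Ω)) ⊆ Ω := iUnion_subset S.mapsInto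
  refine ⟨⋃ i, closure (S.φ i '' Ω), ?_, ?_, hKΩ, fun i x hx => ?_⟩
  · exact isCompact_iUnion fun i =>
      isCompact_of_isClosed_isBounded isClosed_closure (S.isBounded.subset (S.mapsInto i))
  · exact ⟨_, mem_iUnion.2 ⟨i₀, subset_closure (mem_image_of_mem _ S.nonempty.some_mem)⟩⟩
  · exact mem_iUnion.2 ⟨i, subset_closure (mem_image_of_mem _ (hKΩ hx))⟩

theorem norm_wmap_sub_le_pow_mul_diam {s : ℝ} (hs0 : 0 ≤ s)
    (hs : ∀ i, ∀ x ∈ Ω, ‖fderiv ℝ (S.φ i) x‖ ≤ s) (w : List (Fin N)) {x y : X} (hx : x ∈ Ω)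
    (hy : y ∈ Ω) : ‖S.wmap w x - S.wmap w y‖ ≤ s ^ w.length * diam Ω := by
  rw [← dist_eq_norm]
  exact (S.dist_wmap_le w hx hy).trans (mul_le_mul
    (S.dnorm_le fun _ hz => S.norm_fderiv_wmap_le_pow hs0 hs w hz)
    (dist_le_diam_of_mem S.isBounded hx hy) dist_nonneg (pow_nonneg hs0 _))

/-- The Hölder continuity of the `φ i'`, together with the geometric shrinking of the images
`φ_u(Ω)`, makes the relative change of `‖φ i'‖` over `φ_u(Ω)` summable in the length of `u`. -/
theorem exists_summable_norm_fderiv_le {K : Set X} (hK : IsCompact K) (hKΩ : K ⊆ Ω)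
    (hKφ : ∀ i, MapsTo (S.φ i) K K) :
    ∃ τ : ℕ → ℝ, (∀ n, 0 ≤ τ n) ∧ Summable τ ∧ ∀ i u, ∀ x ∈ Ω, ∀ y ∈ K,
      ‖fderiv ℝ (S.φ i) (S.wmap u x)‖
        ≤ (1 + τ u.length) * ‖fderiv ℝ (S.φ i) (S.wmap u y)‖ := by
  obtain ⟨s, hs0, hs1, hs⟩ := S.exists_lt_one_forall_norm_fderiv_le
  obtain ⟨m, hm, hmK⟩ := S.exists_pos_forall_le_norm_fderiv hK hKΩ
  choose α c hα hc hH using S.holder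
  set Δ := diam Ω
  have hterm0 : ∀ i n, 0 ≤ c i * Δ ^ α i * (s ^ α i) ^ n := fun i n =>
    mul_nonneg (mul_nonneg (hc i).le (Real.rpow_nonneg diam_nonneg _))
      (pow_nonneg (Real.rpow_nonneg hs0 _) _)
  refine ⟨fun n => (∑ i, c i * Δ ^ α i * (s ^ α i) ^ n) / m,
    fun n => div_nonneg (Finset.sum_nonneg fun i _ => hterm0 i n) hm.le,
    (summable_sum fun i _ => (summable_geometric_of_lt_one (Real.rpow_nonneg hs0 _)
      (Real.rpow_lt_one hs0 hs1 (hα i))).mul_left _).div_const m, fun i u x hx y hy => ?_⟩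
  have hux := S.wmap_mem u hx
  have huy := S.mapsTo_wmap hKφ u hy
  have hterm : c i * ‖S.wmap u x - S.wmap u y‖ ^ α i
      ≤ c i * Δ ^ α i * (s ^ α i) ^ u.length := by
    rw [Real.rpow_pow_comm hs0, mul_assoc, ← Real.mul_rpow diam_nonneg (pow_nonneg hs0 _),
      mul_comm Δ]
    exact mul_le_mul_of_nonneg_left (Real.rpow_le_rpow (norm_nonneg _)
      (S.norm_wmap_sub_le_pow_mul_diam hs0 hs u hx (hKΩ hy)) (hα i).le) (hc i).le
  have hsum : c i * Δ ^ α i * (s ^ α i) ^ u.length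
      ≤ (∑ j, c j * Δ ^ α j * (s ^ α j) ^ u.length) / m * m := by
    rw [div_mul_cancel₀ _ hm.ne']
    exact Finset.single_le_sum (f := fun j => c j * Δ ^ α j * (s ^ α j) ^ u.length)
      (fun j _ => hterm0 j _) (Finset.mem_univ i)
  have hτ0 : 0 ≤ (∑ j, c j * Δ ^ α j * (s ^ α j) ^ u.length) / m :=
    div_nonneg (Finset.sum_nonneg fun j _ => hterm0 j _) hm.le
  calc ‖fderiv ℝ (S.φ i) (S.wmap u x)‖
      ≤ ‖fderiv ℝ (S.φ i) (S.wmap u y)‖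
        + ‖fderiv ℝ (S.φ i) (S.wmap u x) - fderiv ℝ (S.φ i) (S.wmap u y)‖ :=
        norm_le_norm_add_norm_sub' _ _
    _ ≤ ‖fderiv ℝ (S.φ i) (S.wmap u y)‖
        + (∑ j, c j * Δ ^ α j * (s ^ α j) ^ u.length) / m * m := by
        gcongr
        exact (hH i _ hux _ (hKΩ huy)).trans (hterm.trans hsum)
    _ ≤ (1 + (∑ j, c j * Δ ^ α j * (s ^ α j) ^ u.length) / m)
        * ‖fderiv ℝ (S.φ i) (S.wmap u y)‖ := by
        rw [one_add_mul]
        gcongr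
        exact hmK i _ huy

theorem norm_fderiv_wmap_le_exp_tsum_mul {K : Set X} (hKΩ : K ⊆ Ω) {τ : ℕ → ℝ}
    (hτ0 : ∀ n, 0 ≤ τ n) (hτ : Summable τ)
    (hstep : ∀ i u, ∀ x ∈ Ω, ∀ y ∈ K,
      ‖fderiv ℝ (S.φ i) (S.wmap u x)‖ ≤ (1 + τ u.length) * ‖fderiv ℝ (S.φ i) (S.wmap u y)‖)
    (w : List (Fin N)) {x y : X} (hx : x ∈ Ω) (hy : y ∈ K) :
    ‖fderiv ℝ (S.wmap w) x‖ ≤ Real.exp (∑' n, τ n) * ‖fderiv ℝ (S.wmap w) y‖ := by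
  suffices h : ∀ w : List (Fin N), ∀ x ∈ Ω, ∀ y ∈ K, ‖fderiv ℝ (S.wmap w) x‖
      ≤ Real.exp (∑ n ∈ Finset.range w.length, τ n) * ‖fderiv ℝ (S.wmap w) y‖ by
    refine (h w x hx y hy).trans (mul_le_mul_of_nonneg_right ?_ (norm_nonneg _))
    exact Real.exp_le_exp.2 (hτ.sum_le_tsum _ fun n _ => hτ0 n)
  have := S.nontrivial
  intro w
  induction w with
  | nil => simp [wmap]
  | cons i u ih =>
    intro x hx y hy
    have hexp := Real.add_one_le_exp (τ u.length)
    rw [S.norm_fderiv_wmap_cons i u hx, S.norm_fderiv_wmap_cons i u (hKΩ hy), List.length_cons,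
      Finset.sum_range_succ, Real.exp_add]
    calc ‖fderiv ℝ (S.φ i) (S.wmap u x)‖ * ‖fderiv ℝ (S.wmap u) x‖
        ≤ ((1 + τ u.length) * ‖fderiv ℝ (S.φ i) (S.wmap u y)‖)
          * (Real.exp (∑ n ∈ Finset.range u.length, τ n) * ‖fderiv ℝ (S.wmap u) y‖) :=
          mul_le_mul (hstep i u x hx y hy) (ih x hx y hy) (norm_nonneg _)
            (mul_nonneg (by linarith [hτ0 u.length]) (norm_nonneg _))
      _ ≤ (Real.exp (τ u.length) * ‖fderiv ℝ (S.φ i) (S.wmap u y)‖)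
          * (Real.exp (∑ n ∈ Finset.range u.length, τ n) * ‖fderiv ℝ (S.wmap u) y‖) := by
          gcongr
          linarith
      _ = _ := by ring

theorem exists_dnorm_le_mul_dnorm_append_singleton [ProperSpace X] :
    ∃ c : ℝ, 0 < c ∧ ∀ u i, S.dnorm u ≤ c * S.dnorm (u ++ [i]) := by
  obtain ⟨K, hK, ⟨a, ha⟩, hKΩ, hKφ⟩ := S.exists_isCompact_mapsTo
  obtain ⟨τ, hτ0, hτ, hstep⟩ := S.exists_summable_norm_fderiv_le hK hKΩ hKφ
  obtain ⟨m, hm, hmK⟩ := S.exists_pos_forall_le_norm_fderiv hK hKΩ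
  set D := Real.exp (∑' n, τ n)
  refine ⟨D / m, div_pos (Real.exp_pos _) hm, fun u i => ?_⟩
  calc S.dnorm u ≤ D * ‖fderiv ℝ (S.wmap u) (S.φ i a)‖ := S.dnorm_le fun x hx =>
        S.norm_fderiv_wmap_le_exp_tsum_mul hKΩ hτ0 hτ hstep u hx (hKφ i ha)
    _ ≤ D / m * (‖fderiv ℝ (S.wmap u) (S.φ i a)‖ * ‖fderiv ℝ (S.φ i) a‖) := by
      rw [div_mul_eq_mul_div, le_div_iff₀ hm, mul_assoc]
      gcongr
      exact hmK i a ha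
    _ = D / m * ‖fderiv ℝ (S.wmap (u ++ [i])) a‖ := by
      rw [S.norm_fderiv_wmap_append u [i] (hKΩ ha), wmap_singleton]
    _ ≤ D / m * S.dnorm (u ++ [i]) := by
      gcongr
      exact S.norm_fderiv_wmap_le_dnorm _ (hKΩ ha)

theorem exists_lt_mul_dnorm_of_lt_diam [ProperSpace X] {F : Set X} (hFΩ : F ⊆ Ω) :
    ∃ c : ℝ, 0 < c ∧ ∀ (w : List (Fin N)) (r : ℝ), w ≠ [] →
      r < diam (S.wmap w.dropLast '' F) → r < c * S.dnorm w := by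
  obtain ⟨c, hc, hdnorm⟩ := S.exists_dnorm_le_mul_dnorm_append_singleton
  refine ⟨c * diam F + 1, by positivity, fun w r hw hr => ?_⟩
  obtain ⟨u, i, rfl⟩ := (List.eq_nil_or_concat w).resolve_left hw
  rw [List.concat_eq_append, List.dropLast_concat] at hr
  rw [List.concat_eq_append]
  calc r < diam (S.wmap u '' F) := hr
    _ ≤ S.dnorm u * diam F := S.diam_image_wmap_le hFΩ u
    _ ≤ c * S.dnorm (u ++ [i]) * diam F := by gcongr; exact hdnorm u i
    _ ≤ (c * diam F + 1) * S.dnorm (u ++ [i]) := by linarith [S.dnorm_nonneg (u ++ [i])]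

theorem mem_closedBall_of_mem_Phi {F : Set X} (hFΩ : F ⊆ Ω) {x : X} {r : ℝ} {g : F → X}
    (hg : g ∈ S.Phi F x r) (p : F) : g p ∈ closedBall x (2 * r) := by
  obtain ⟨w, -, hdiam, -, ⟨y, hy, hyx⟩, rfl⟩ := hg
  have hbdd : Bornology.IsBounded (S.wmap w '' F) :=
    S.isBounded.subset ((S.mapsTo_wmap S.mapsTo_φ w).mono_left hFΩ).image_subset
  calc dist (S.wmap w p) x ≤ dist (S.wmap w p) y + dist y x := dist_triangle _ _ _
    _ ≤ r + r := add_le_add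
        ((dist_le_diam_of_mem hbdd (mem_image_of_mem _ p.2) hy).trans hdiam) (mem_closedBall.1 hyx)
    _ = 2 * r := by ring

theorem sep_comm (F : Set X) (w v : List (Fin N)) : S.sep F w v = S.sep F v w := by
  simp only [sep, dist_comm]

/-- On the `ε/4`-net `P`, the Lipschitz constants `dnorm w, dnorm v ≤ sep F w v / ε` lose at most
half of the separation `sep F w v`. -/
theorem exists_mem_le_dist_of_restrict_ne {F : Set X} (hFΩ : F ⊆ Ω) {ε : ℝ}
    (hILC : ∀ w v : List (Fin N), F.domRestrict (S.wmap w) ≠ F.domRestrict (S.wmap v) →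
      ε * S.dnorm w ≤ S.sep F w v)
    {P : Set F} (hP : ∀ x : F, ∃ p ∈ P, dist x p < ε / 4) {w v : List (Fin N)}
    (hwv : F.domRestrict (S.wmap w) ≠ F.domRestrict (S.wmap v)) :
    ∃ p ∈ P, ε * S.dnorm w / 4 ≤ dist (S.wmap w p) (S.wmap v p) := by
  have hw := hILC w v hwv
  have hv := S.sep_comm F w v ▸ hILC v w hwv.symm
  obtain ⟨x₁, -⟩ := Function.ne_iff.1 hwv
  have : Nonempty F := ⟨x₁⟩
  rcases le_or_gt (S.sep F w v) 0 with hσ | hσ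
  · obtain ⟨p, hp, -⟩ := hP x₁
    exact ⟨p, hp, by linarith [dist_nonneg (x := S.wmap w p) (y := S.wmap v p)]⟩
  obtain ⟨x₀, hx₀⟩ :=
    exists_lt_of_lt_ciSup (show 3 / 4 * S.sep F w v < S.sep F w v by linarith)
  obtain ⟨p, hp, hx₀p⟩ := hP x₀
  have hLip : ∀ u, dist (S.wmap u x₀) (S.wmap u p) ≤ S.dnorm u * (ε / 4) := fun u =>
    (S.dist_wmap_le u (hFΩ x₀.2) (hFΩ p.2)).trans
      (mul_le_mul_of_nonneg_left hx₀p.le (S.dnorm_nonneg u))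
  refine ⟨p, hp, ?_⟩
  have := dist_triangle4 (S.wmap w x₀) (S.wmap w p) (S.wmap v p) (S.wmap v x₀)
  rw [dist_comm (S.wmap v p)] at this
  linarith [hLip w, hLip v]

end CIFS

theorem ilc_implies_wsc {d N : ℕ} {Ω : Set (EuclideanSpace ℝ (Fin d))}
    (S : CIFS (EuclideanSpace ℝ (Fin d)) N Ω)
    (F : Set (EuclideanSpace ℝ (Fin d))) (hF : S.IsAttractor F)
    (h : S.ILC F) : S.WSC F := by
  obtain ⟨-, hFc, hFΩ, -⟩ := hF
  obtain ⟨ε, hε, hILC⟩ := h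
  obtain ⟨c, hc, hdnorm⟩ := S.exists_lt_mul_dnorm_of_lt_diam hFΩ
  have := isCompact_iff_compactSpace.1 hFc
  obtain ⟨P, -, hPfin, hPcov⟩ := isCompact_univ.finite_cover_balls (X := F) (e := ε / 4)
    (by positivity)
  have hP : ∀ x : F, ∃ p ∈ P, dist x p < ε / 4 := fun x => by
    obtain ⟨p, hp, hxp⟩ := mem_iUnion₂.1 (hPcov (mem_univ x))
    exact ⟨p, hp, hxp⟩
  let := hPfin.fintype
  obtain ⟨M, hM⟩ := exists_ncard_le_of_pairwise_le_dist (ι := F → EuclideanSpace ℝ (Fin d))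
    (E := P → EuclideanSpace ℝ (Fin d)) (κ := ε / (8 * c)) (by positivity)
  refine ⟨M, fun x _ r hr => hM (fun g p => g p) _ (fun _ => x) (2 * r) (by positivity)
    (fun g hg => (dist_pi_le_iff (by positivity)).2 (S.mem_closedBall_of_mem_Phi hFΩ hg ·)) ?_⟩
  rintro _ ⟨w, hw, -, hr_lt, -, rfl⟩ _ ⟨v, -, -, -, -, rfl⟩ hwv
  obtain ⟨p, hp, hdist⟩ := S.exists_mem_le_dist_of_restrict_ne hFΩ hILC hP hwv
  have hrc : r / c ≤ S.dnorm w := (div_le_iff₀' hc).2 (hdnorm w r hw hr_lt).le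
  calc ε / (8 * c) * (2 * r) = ε * (r / c) / 4 := by field_simp; ring
    _ ≤ ε * S.dnorm w / 4 := by gcongr
    _ ≤ dist (S.wmap w p) (S.wmap v p) := hdist
    _ ≤ _ := dist_le_pi_dist (fun q : P => S.wmap w q) (fun q : P => S.wmap v q) ⟨p, hp⟩
end
end

section
/- Let {φ_1,…,φ_N} be a conformal iterated function system on a bounded open convex set Ω ⊂ ℝ^d, and let V ⊂ ℝ^d be a bounded open convex set with φ_i(closure(V)) ⊂ V ⊂ closure(V) ⊂ Ω for all i ∈ {1,…,N}. Then there exist constants α, c > 0 such that |φ_𝚒'(x) − φ_𝚒'(y)| ≤ c‖φ_𝚒'‖|x − y|^α for all x, y ∈ V and all finite words 𝚒 ∈ Σ_*. -/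
open MeasureTheory Set
open scoped ENNReal NNReal

noncomputable section

section Aux

variable {X : Type*} [NormedAddCommGroup X] [NormedSpace ℝ X]

theorem conf_comp_norm (A B : X →L[ℝ] X) (hA : ∀ v, ‖A v‖ = ‖A‖ * ‖v‖)
    (hB : ∀ v, ‖B v‖ = ‖B‖ * ‖v‖) :
    ‖A.comp B‖ = ‖A‖ * ‖B‖ ∧ ∀ v, ‖(A.comp B) v‖ = ‖A.comp B‖ * ‖v‖ := by
  have hAB : ∀ v, ‖(A.comp B) v‖ = (‖A‖ * ‖B‖) * ‖v‖ := by
    intro v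
    rw [ContinuousLinearMap.comp_apply, hA, hB]; ring
  have heq : ‖A.comp B‖ = ‖A‖ * ‖B‖ := by
    refine le_antisymm (ContinuousLinearMap.opNorm_comp_le A B) ?_
    by_cases hB0 : B = 0
    · simp [hB0]
    · obtain ⟨v, hv⟩ : ∃ v, B v ≠ 0 := by
        by_contra h; push_neg at h
        exact hB0 (ContinuousLinearMap.ext fun v => by simp [h v])
      have hv0 : v ≠ 0 := fun h => hv (by simp [h])
      have hvn : 0 < ‖v‖ := norm_pos_iff.2 hv0
      have := (A.comp B).le_opNorm v
      rw [hAB v] at this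
      exact le_of_mul_le_mul_right this hvn
  exact ⟨heq, fun v => by rw [hAB v, heq]⟩

theorem comp_sub_decomp (A₁ A₂ B₁ B₂ : X →L[ℝ] X) :
    A₁.comp B₁ - A₂.comp B₂ = A₁.comp (B₁ - B₂) + (A₁ - A₂).comp B₂ := by
  rw [ContinuousLinearMap.comp_sub, ContinuousLinearMap.sub_comp]
  abel

end Aux

set_option maxHeartbeats 1000000 in
set_option synthInstance.maxHeartbeats 400000 in
theorem derivatives_holder {d N : ℕ} {Ω : Set (EuclideanSpace ℝ (Fin d))}
    (S : CIFS (EuclideanSpace ℝ (Fin d)) N Ω)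
    (V : Set (EuclideanSpace ℝ (Fin d)))
    (hVo : IsOpen V) (hVb : Bornology.IsBounded V) (hVc : Convex ℝ V)
    (hVΩ : closure V ⊆ Ω) (hVmaps : ∀ i, S.φ i '' closure V ⊆ V) :
    ∃ α c : ℝ, 0 < α ∧ 0 < c ∧ ∀ w : List (Fin N), ∀ x ∈ V, ∀ y ∈ V,
      ‖fderiv ℝ (S.wmap w) x - fderiv ℝ (S.wmap w) y‖ ≤
        c * S.dnorm w * ‖x - y‖ ^ α := by
  classical
  by_cases hVne : V.Nonempty
  swap
  · exact ⟨1, 1, one_pos, one_pos, fun w x hx => absurd ⟨x, hx⟩ hVne⟩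
  -- basic notation
  have hwnil : S.wmap ([] : List (Fin N)) = id := rfl
  have hwcons : ∀ (i : Fin N) (u : List (Fin N)), S.wmap (i :: u) = S.φ i ∘ S.wmap u :=
    fun _ _ => rfl
  have hφΩ : ∀ i, ∀ z ∈ Ω, S.φ i z ∈ Ω := fun i z hz =>
    S.mapsInto i (subset_closure ⟨z, hz, rfl⟩)
  have hmapΩ : ∀ u : List (Fin N), ∀ z ∈ Ω, S.wmap u z ∈ Ω := by
    intro u
    induction u with
    | nil => intro z hz; exact hz
    | cons i u ih =>
      intro z hz
      rw [hwcons]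
      exact hφΩ i _ (ih z hz)
  have hmapV : ∀ u : List (Fin N), ∀ z ∈ closure V, S.wmap u z ∈ closure V := by
    intro u
    induction u with
    | nil => intro z hz; exact hz
    | cons i u ih =>
      intro z hz
      rw [hwcons]
      exact subset_closure (hVmaps i ⟨_, ih z hz, rfl⟩)
  have hdiff : ∀ u : List (Fin N), ∀ z ∈ Ω, DifferentiableAt ℝ (S.wmap u) z := by
    intro u
    induction u with
    | nil => intro z _; exact differentiableAt_id
    | cons i u ih =>
      intro z hz
      rw [hwcons]
      exact (S.diffAt i _ (hmapΩ u z hz)).comp z (ih z hz)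
  have hchain : ∀ (i : Fin N) (u : List (Fin N)), ∀ z ∈ Ω,
      fderiv ℝ (S.wmap (i :: u)) z
        = (fderiv ℝ (S.φ i) (S.wmap u z)).comp (fderiv ℝ (S.wmap u) z) := by
    intro i u z hz
    rw [hwcons]
    exact fderiv_comp z (S.diffAt i _ (hmapΩ u z hz)) (hdiff u z hz)
  -- conformality of word maps
  have hconf : ∀ u : List (Fin N), ∀ z ∈ Ω, ∀ v,
      ‖fderiv ℝ (S.wmap u) z v‖ = ‖fderiv ℝ (S.wmap u) z‖ * ‖v‖ := by
    intro u
    induction u with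
    | nil =>
      intro z _ v
      rw [hwnil, fderiv_id]
      rcases subsingleton_or_nontrivial (EuclideanSpace ℝ (Fin d)) with h | h
      · have : v = 0 := Subsingleton.elim _ _
        simp [this]
      · haveI := h
        rw [ContinuousLinearMap.id_apply, ContinuousLinearMap.norm_id, one_mul]
    | cons i u ih =>
      intro z hz v
      rw [hchain i u z hz]
      exact (conf_comp_norm _ _ (S.conformal i _ (hmapΩ u z hz)) (ih z hz)).2 v
  have hnormmul : ∀ (i : Fin N) (u : List (Fin N)), ∀ z ∈ Ω,
      ‖fderiv ℝ (S.wmap (i :: u)) z‖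
        = ‖fderiv ℝ (S.φ i) (S.wmap u z)‖ * ‖fderiv ℝ (S.wmap u) z‖ := by
    intro i u z hz
    rw [hchain i u z hz]
    exact (conf_comp_norm _ _ (S.conformal i _ (hmapΩ u z hz)) (hconf u z hz)).1
  -- the uniform contraction ratio s
  have hN : (Finset.univ : Finset (Fin N)).Nonempty :=
    ⟨⟨0, by have := S.two_le; omega⟩, Finset.mem_univ _⟩
  choose sc hsc1 hscb using S.contract
  set s : ℝ := max (Finset.univ.sup' hN sc) (1 / 2) with hs_def
  have hs1 : s < 1 := by
    apply max_lt _ (by norm_num)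
    exact (Finset.sup'_lt_iff hN).2 fun i _ => hsc1 i
  have hs0 : (0 : ℝ) < s := lt_of_lt_of_le (by norm_num) (le_max_right _ _)
  have hsb : ∀ i, ∀ z ∈ Ω, ‖fderiv ℝ (S.φ i) z‖ ≤ s := fun i z hz =>
    (hscb i z hz).trans ((Finset.le_sup' sc (Finset.mem_univ i)).trans (le_max_left _ _))
  -- derivative norms are at most 1 on Ω
  have hDle1 : ∀ u : List (Fin N), ∀ z ∈ Ω, ‖fderiv ℝ (S.wmap u) z‖ ≤ 1 := by
    intro u
    induction u with
    | nil =>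
      intro z _
      rw [hwnil, fderiv_id]
      exact ContinuousLinearMap.norm_id_le
    | cons i u ih =>
      intro z hz
      rw [hnormmul i u z hz]
      exact mul_le_one₀ ((hsb i _ (hmapΩ u z hz)).trans hs1.le) (norm_nonneg _) (ih z hz)
  have hdnorm : ∀ u : List (Fin N), ∀ z ∈ Ω, ‖fderiv ℝ (S.wmap u) z‖ ≤ S.dnorm u := by
    intro u z hz
    apply le_csSup
    · exact ⟨1, fun t ht => by obtain ⟨x, hx, rfl⟩ := ht; exact hDle1 u x hx⟩
    · exact ⟨z, hz, rfl⟩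
  -- uniform Hölder exponent and constant
  choose a c ha0 hc0 hhold0 using S.holder
  set A : ℝ := min (Finset.univ.inf' hN a) 1 with hA_def
  have hA0 : 0 < A := lt_min ((Finset.lt_inf'_iff hN).2 fun i _ => ha0 i) one_pos
  have hAle : ∀ i, A ≤ a i := fun i =>
    (min_le_left _ _).trans (Finset.inf'_le a (Finset.mem_univ i))
  -- diameter bound
  obtain ⟨R, hR⟩ := Metric.isBounded_iff.1 hVb.closure
  set Db : ℝ := max R 1 with hDb_def
  have hDb1 : (1 : ℝ) ≤ Db := le_max_right _ _
  have hDb0 : (0 : ℝ) < Db := lt_of_lt_of_le one_pos hDb1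
  have hdistD : ∀ x ∈ closure V, ∀ y ∈ closure V, ‖x - y‖ ≤ Db := by
    intro x hx y hy
    rw [← dist_eq_norm]
    exact (hR hx hy).trans (le_max_left _ _)
  set c₀ : ℝ := Finset.univ.sup' hN (fun i => c i * Db ^ (a i - A)) with hc₀_def
  have hc₀i : ∀ i, c i * Db ^ (a i - A) ≤ c₀ := by
    intro i
    rw [hc₀_def]
    exact Finset.le_sup' (fun j => c j * Db ^ (a j - A)) (Finset.mem_univ i)
  have hc₀0 : 0 < c₀ := by
    have i0 : Fin N := ⟨0, by have := S.two_le; omega⟩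
    refine lt_of_lt_of_le ?_ (hc₀i i0)
    have := hc0 i0
    positivity
  have hhold : ∀ i, ∀ x ∈ closure V, ∀ y ∈ closure V,
      ‖fderiv ℝ (S.φ i) x - fderiv ℝ (S.φ i) y‖ ≤ c₀ * ‖x - y‖ ^ A := by
    intro i x hx y hy
    have h1 := hhold0 i x (hVΩ hx) y (hVΩ hy)
    by_cases ht : ‖x - y‖ = 0
    · have hxy : x = y := sub_eq_zero.mp (norm_eq_zero.mp ht)
      subst hxy
      simp [sub_self, Real.zero_rpow (ne_of_gt hA0)]
    · have ht0 : 0 < ‖x - y‖ := lt_of_le_of_ne (norm_nonneg _) (Ne.symm ht)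
      have h2 : ‖x - y‖ ^ a i = ‖x - y‖ ^ (a i - A) * ‖x - y‖ ^ A := by
        rw [← Real.rpow_add ht0, sub_add_cancel]
      have h3 : ‖x - y‖ ^ (a i - A) ≤ Db ^ (a i - A) :=
        Real.rpow_le_rpow ht0.le (hdistD x hx y hy) (sub_nonneg.2 (hAle i))
      calc ‖fderiv ℝ (S.φ i) x - fderiv ℝ (S.φ i) y‖ ≤ c i * ‖x - y‖ ^ a i := h1
        _ = c i * (‖x - y‖ ^ (a i - A) * ‖x - y‖ ^ A) := by rw [h2]
        _ ≤ c i * (Db ^ (a i - A) * ‖x - y‖ ^ A) :=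
            mul_le_mul_of_nonneg_left
              (mul_le_mul_of_nonneg_right h3 (Real.rpow_nonneg (norm_nonneg _) A))
              (hc0 i).le
        _ = c i * Db ^ (a i - A) * ‖x - y‖ ^ A := by ring
        _ ≤ c₀ * ‖x - y‖ ^ A :=
            mul_le_mul_of_nonneg_right (hc₀i i) (Real.rpow_nonneg (norm_nonneg _) A)
  -- compactness, continuity and lower bound m
  have hclV : IsCompact (closure V) :=
    Metric.isCompact_of_isClosed_isBounded isClosed_closure hVb.closure
  have hclne : (closure V).Nonempty := hVne.closure
  have hcont : ∀ i, ContinuousOn (fun z => ‖fderiv ℝ (S.φ i) z‖) (closure V) := by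
    intro i
    have : ContinuousOn (fun z => fderiv ℝ (S.φ i) z) (closure V) := by
      rw [Metric.continuousOn_iff]
      intro z hz ε hε
      refine ⟨(ε / (2 * c₀)) ^ A⁻¹, Real.rpow_pos_of_pos (by positivity) _, ?_⟩
      intro y hy hd
      have h1 : ‖fderiv ℝ (S.φ i) y - fderiv ℝ (S.φ i) z‖ ≤ c₀ * ‖y - z‖ ^ A :=
        hhold i y hy z hz
      have h2 : ‖y - z‖ ^ A < ((ε / (2 * c₀)) ^ A⁻¹) ^ A := by
        apply Real.rpow_lt_rpow (norm_nonneg _) _ hA0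
        rwa [← dist_eq_norm]
      rw [Real.rpow_inv_rpow (by positivity) (ne_of_gt hA0)] at h2
      rw [dist_eq_norm]
      calc ‖fderiv ℝ (S.φ i) y - fderiv ℝ (S.φ i) z‖ ≤ c₀ * ‖y - z‖ ^ A := h1
        _ < c₀ * (ε / (2 * c₀)) := by nlinarith
        _ < ε := by rw [mul_div_assoc']; rw [div_lt_iff₀ (by positivity)]; nlinarith
    exact this.norm
  have hmi : ∀ i, ∃ mi : ℝ, 0 < mi ∧ ∀ z ∈ closure V, mi ≤ ‖fderiv ℝ (S.φ i) z‖ := by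
    intro i
    obtain ⟨z0, hz0, hmin⟩ := hclV.exists_isMinOn hclne (hcont i)
    refine ⟨‖fderiv ℝ (S.φ i) z0‖, norm_pos_iff.2 (S.fderiv_ne i z0 (hVΩ hz0)), ?_⟩
    exact fun z hz => isMinOn_iff.1 hmin z hz
  choose mi hmi0 hmib using hmi
  set m : ℝ := Finset.univ.inf' hN mi with hm_def
  have hm0 : 0 < m := (Finset.lt_inf'_iff hN).2 fun i _ => hmi0 i
  have hmb : ∀ i, ∀ z ∈ closure V, m ≤ ‖fderiv ℝ (S.φ i) z‖ := fun i z hz =>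
    (Finset.inf'_le mi (Finset.mem_univ i)).trans (hmib i z hz)
  -- Lipschitz estimates
  have hlip : ∀ i, ∀ x ∈ closure V, ∀ y ∈ closure V,
      ‖S.φ i x - S.φ i y‖ ≤ s * ‖x - y‖ := by
    intro i x hx y hy
    exact Convex.norm_image_sub_le_of_norm_fderiv_le
      (fun z hz => S.diffAt i z (hVΩ hz)) (fun z hz => hsb i z (hVΩ hz))
      hVc.closure hy hx
  have hwlip : ∀ u : List (Fin N), ∀ x ∈ closure V, ∀ y ∈ closure V,
      ‖S.wmap u x - S.wmap u y‖ ≤ s ^ u.length * ‖x - y‖ := by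
    intro u
    induction u with
    | nil => intro x hx y hy; simp [hwnil]
    | cons i u ih =>
      intro x hx y hy
      rw [hwcons]
      calc ‖S.φ i (S.wmap u x) - S.φ i (S.wmap u y)‖
          ≤ s * ‖S.wmap u x - S.wmap u y‖ :=
            hlip i _ (hmapV u x hx) _ (hmapV u y hy)
        _ ≤ s * (s ^ u.length * ‖x - y‖) := by
            exact mul_le_mul_of_nonneg_left (ih x hx y hy) hs0.le
        _ = s ^ (i :: u).length * ‖x - y‖ := by
            rw [List.length_cons, pow_succ]; ring
  -- constants
  set lam : ℝ := s ^ A with hlam_def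
  have hlam0 : 0 < lam := Real.rpow_pos_of_pos hs0 _
  have hlam1 : lam < 1 := Real.rpow_lt_one hs0.le hs1 hA0
  have h1lam : 0 < 1 - lam := by linarith
  set q : ℝ := c₀ * Db ^ A / m with hq_def
  have hq0 : 0 < q := by positivity
  set K : ℝ := Real.exp (q / (1 - lam)) with hK_def
  have hK1 : (1 : ℝ) ≤ K := Real.one_le_exp (by positivity)
  have hK0 : (0 : ℝ) < K := lt_of_lt_of_le one_pos hK1
  set B : ℝ := c₀ * K / m with hB_def
  have hB0 : 0 < B := by positivity
  -- (s^n * t)^A = lam^n * t^A ingredient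
  have hpow : ∀ n : ℕ, (s ^ n) ^ A = lam ^ n := by
    intro n
    rw [← Real.rpow_natCast s n, ← Real.rpow_mul hs0.le, mul_comm,
      Real.rpow_mul hs0.le, Real.rpow_natCast]
  have hgeo : ∀ u : List (Fin N), ∀ x ∈ closure V, ∀ y ∈ closure V,
      ‖S.wmap u x - S.wmap u y‖ ^ A ≤ lam ^ u.length * ‖x - y‖ ^ A := by
    intro u x hx y hy
    calc ‖S.wmap u x - S.wmap u y‖ ^ A ≤ (s ^ u.length * ‖x - y‖) ^ A :=
          Real.rpow_le_rpow (norm_nonneg _) (hwlip u x hx y hy) hA0.le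
      _ = lam ^ u.length * ‖x - y‖ ^ A := by
          rw [Real.mul_rpow (pow_nonneg hs0.le _) (norm_nonneg _), hpow]
  -- bounded distortion (P2)
  have hP2 : ∀ u : List (Fin N), ∀ x ∈ closure V, ∀ y ∈ closure V,
      ‖fderiv ℝ (S.wmap u) y‖
        ≤ Real.exp (q * (1 - lam ^ u.length) / (1 - lam)) * ‖fderiv ℝ (S.wmap u) x‖ := by
    intro u
    induction u with
    | nil =>
      intro x hx y hy
      simp [hwnil, fderiv_id]
    | cons i u ih =>
      intro x hx y hy
      have hxΩ := hVΩ hx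
      have hyΩ := hVΩ hy
      set n := u.length with hn_def
      have hgx : S.wmap u x ∈ closure V := hmapV u x hx
      have hgy : S.wmap u y ∈ closure V := hmapV u y hy
      have h2 : ‖fderiv ℝ (S.φ i) (S.wmap u y)‖
          ≤ ‖fderiv ℝ (S.φ i) (S.wmap u x)‖ * (1 + q * lam ^ n) := by
        have hd : ‖fderiv ℝ (S.φ i) (S.wmap u y) - fderiv ℝ (S.φ i) (S.wmap u x)‖
            ≤ c₀ * (lam ^ n * Db ^ A) := by
          calc ‖fderiv ℝ (S.φ i) (S.wmap u y) - fderiv ℝ (S.φ i) (S.wmap u x)‖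
              ≤ c₀ * ‖S.wmap u y - S.wmap u x‖ ^ A := hhold i _ hgy _ hgx
            _ ≤ c₀ * (lam ^ n * ‖y - x‖ ^ A) :=
                mul_le_mul_of_nonneg_left (hgeo u y hy x hx) hc₀0.le
            _ ≤ c₀ * (lam ^ n * Db ^ A) := by
                have h3 : ‖y - x‖ ^ A ≤ Db ^ A :=
                  Real.rpow_le_rpow (norm_nonneg _) (hdistD y hy x hx) hA0.le
                have h4 : (0:ℝ) ≤ lam ^ n := (pow_pos hlam0 n).le
                exact mul_le_mul_of_nonneg_left
                  (mul_le_mul_of_nonneg_left h3 h4) hc₀0.le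
        have h5 : c₀ * (lam ^ n * Db ^ A) = q * m * lam ^ n := by
          rw [hq_def]; field_simp
        have h6 := norm_sub_norm_le (fderiv ℝ (S.φ i) (S.wmap u y))
          (fderiv ℝ (S.φ i) (S.wmap u x))
        have h7 := hmb i _ hgx
        have h8 : (0:ℝ) ≤ lam ^ n := (pow_pos hlam0 n).le
        nlinarith [mul_le_mul_of_nonneg_left h7 (mul_nonneg hq0.le h8)]
      have h9 : (1 : ℝ) + q * lam ^ n ≤ Real.exp (q * lam ^ n) := by
        have := Real.add_one_le_exp (q * lam ^ n); linarith
      calc ‖fderiv ℝ (S.wmap (i :: u)) y‖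
          = ‖fderiv ℝ (S.φ i) (S.wmap u y)‖ * ‖fderiv ℝ (S.wmap u) y‖ :=
            hnormmul i u y hyΩ
        _ ≤ (‖fderiv ℝ (S.φ i) (S.wmap u x)‖ * (1 + q * lam ^ n))
              * (Real.exp (q * (1 - lam ^ n) / (1 - lam)) * ‖fderiv ℝ (S.wmap u) x‖) := by
            apply mul_le_mul h2 (ih x hx y hy) (norm_nonneg _)
            positivity
        _ ≤ (‖fderiv ℝ (S.φ i) (S.wmap u x)‖ * Real.exp (q * lam ^ n))
              * (Real.exp (q * (1 - lam ^ n) / (1 - lam)) * ‖fderiv ℝ (S.wmap u) x‖) := by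
            have h10 : (0:ℝ) ≤ ‖fderiv ℝ (S.φ i) (S.wmap u x)‖ := norm_nonneg _
            have h11 : (0:ℝ) ≤ Real.exp (q * (1 - lam ^ n) / (1 - lam)) * ‖fderiv ℝ (S.wmap u) x‖ := by positivity
            nlinarith [h9, mul_le_mul_of_nonneg_left h9 h10]
        _ = Real.exp (q * (1 - lam ^ (i :: u).length) / (1 - lam))
              * ‖fderiv ℝ (S.wmap (i :: u)) x‖ := by
            have heq : Real.exp (q * lam ^ n) * Real.exp (q * (1 - lam ^ n) / (1 - lam))
                = Real.exp (q * (1 - lam ^ (n + 1)) / (1 - lam)) := by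
              rw [← Real.exp_add]
              congr 1
              field_simp
              ring
            rw [hnormmul i u x hxΩ, List.length_cons, ← hn_def, ← heq]
            ring
  have hP2' : ∀ u : List (Fin N), ∀ x ∈ closure V, ∀ y ∈ closure V,
      ‖fderiv ℝ (S.wmap u) y‖ ≤ K * ‖fderiv ℝ (S.wmap u) x‖ := by
    intro u x hx y hy
    refine (hP2 u x hx y hy).trans (mul_le_mul_of_nonneg_right ?_ (norm_nonneg _))
    rw [hK_def]
    apply Real.exp_le_exp.2
    rw [div_le_div_iff₀ h1lam h1lam]
    have h8 : (0:ℝ) ≤ lam ^ u.length := (pow_pos hlam0 _).le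
    nlinarith [mul_nonneg (mul_nonneg hq0.le h8) h1lam.le]
  -- main Hölder estimate (P1)
  have hP1 : ∀ u : List (Fin N), ∀ x ∈ closure V, ∀ y ∈ closure V,
      ‖fderiv ℝ (S.wmap u) x - fderiv ℝ (S.wmap u) y‖
        ≤ B * ((1 - lam ^ u.length) / (1 - lam)) * ‖fderiv ℝ (S.wmap u) x‖
          * ‖x - y‖ ^ A := by
    intro u
    induction u with
    | nil =>
      intro x hx y hy
      simp [hwnil, fderiv_id]
    | cons i u ih =>
      intro x hx y hy
      have hxΩ := hVΩ hx
      have hyΩ := hVΩ hy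
      set n := u.length with hn_def
      have hgx : S.wmap u x ∈ closure V := hmapV u x hx
      have hgy : S.wmap u y ∈ closure V := hmapV u y hy
      have hdec : fderiv ℝ (S.wmap (i :: u)) x - fderiv ℝ (S.wmap (i :: u)) y
          = (fderiv ℝ (S.φ i) (S.wmap u x)).comp
              (fderiv ℝ (S.wmap u) x - fderiv ℝ (S.wmap u) y)
            + (fderiv ℝ (S.φ i) (S.wmap u x) - fderiv ℝ (S.φ i) (S.wmap u y)).comp
              (fderiv ℝ (S.wmap u) y) := by
        rw [hchain i u x hxΩ, hchain i u y hyΩ]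
        exact comp_sub_decomp _ _ _ _
      have hT1 : ‖(fderiv ℝ (S.φ i) (S.wmap u x)).comp
            (fderiv ℝ (S.wmap u) x - fderiv ℝ (S.wmap u) y)‖
          ≤ ‖fderiv ℝ (S.φ i) (S.wmap u x)‖
            * (B * ((1 - lam ^ n) / (1 - lam)) * ‖fderiv ℝ (S.wmap u) x‖ * ‖x - y‖ ^ A) :=
        (ContinuousLinearMap.opNorm_comp_le _ _).trans
          (mul_le_mul_of_nonneg_left (ih x hx y hy) (norm_nonneg _))
      have hT2 : ‖(fderiv ℝ (S.φ i) (S.wmap u x) - fderiv ℝ (S.φ i) (S.wmap u y)).comp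
            (fderiv ℝ (S.wmap u) y)‖
          ≤ B * lam ^ n * ‖fderiv ℝ (S.φ i) (S.wmap u x)‖
            * ‖fderiv ℝ (S.wmap u) x‖ * ‖x - y‖ ^ A := by
        have h1 : ‖fderiv ℝ (S.φ i) (S.wmap u x) - fderiv ℝ (S.φ i) (S.wmap u y)‖
            ≤ c₀ * (lam ^ n * ‖x - y‖ ^ A) := by
          calc ‖fderiv ℝ (S.φ i) (S.wmap u x) - fderiv ℝ (S.φ i) (S.wmap u y)‖
              ≤ c₀ * ‖S.wmap u x - S.wmap u y‖ ^ A := hhold i _ hgx _ hgy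
            _ ≤ c₀ * (lam ^ n * ‖x - y‖ ^ A) :=
                mul_le_mul_of_nonneg_left (hgeo u x hx y hy) hc₀0.le
        have h2 : ‖fderiv ℝ (S.wmap u) y‖ ≤ K * ‖fderiv ℝ (S.wmap u) x‖ :=
          hP2' u x hx y hy
        have h3 := hmb i _ hgx
        have h4 : (0:ℝ) ≤ lam ^ n := (pow_pos hlam0 n).le
        have h5 : (0:ℝ) ≤ ‖x - y‖ ^ A := Real.rpow_nonneg (norm_nonneg _) _
        calc ‖(fderiv ℝ (S.φ i) (S.wmap u x) - fderiv ℝ (S.φ i) (S.wmap u y)).comp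
              (fderiv ℝ (S.wmap u) y)‖
            ≤ ‖fderiv ℝ (S.φ i) (S.wmap u x) - fderiv ℝ (S.φ i) (S.wmap u y)‖
              * ‖fderiv ℝ (S.wmap u) y‖ := ContinuousLinearMap.opNorm_comp_le _ _
          _ ≤ (c₀ * (lam ^ n * ‖x - y‖ ^ A)) * (K * ‖fderiv ℝ (S.wmap u) x‖) := by
              apply mul_le_mul h1 h2 (norm_nonneg _) (by positivity)
          _ = (c₀ * K / m) * m * lam ^ n * ‖fderiv ℝ (S.wmap u) x‖ * ‖x - y‖ ^ A := by
              field_simp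
          _ ≤ B * lam ^ n * ‖fderiv ℝ (S.φ i) (S.wmap u x)‖
              * ‖fderiv ℝ (S.wmap u) x‖ * ‖x - y‖ ^ A := by
              rw [hB_def]
              have h8' : (0:ℝ) ≤ (c₀ * K / m) * lam ^ n * ‖fderiv ℝ (S.wmap u) x‖
                  * ‖x - y‖ ^ A := by positivity
              nlinarith [mul_le_mul_of_nonneg_left h3 h8']
      calc ‖fderiv ℝ (S.wmap (i :: u)) x - fderiv ℝ (S.wmap (i :: u)) y‖
          ≤ ‖(fderiv ℝ (S.φ i) (S.wmap u x)).comp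
              (fderiv ℝ (S.wmap u) x - fderiv ℝ (S.wmap u) y)‖
            + ‖(fderiv ℝ (S.φ i) (S.wmap u x) - fderiv ℝ (S.φ i) (S.wmap u y)).comp
              (fderiv ℝ (S.wmap u) y)‖ := by
            rw [hdec]; exact norm_add_le _ _
        _ ≤ B * ((1 - lam ^ n) / (1 - lam) + lam ^ n)
              * (‖fderiv ℝ (S.φ i) (S.wmap u x)‖ * ‖fderiv ℝ (S.wmap u) x‖)
              * ‖x - y‖ ^ A := by
            have := hT1.trans_eq (by ring :
              ‖fderiv ℝ (S.φ i) (S.wmap u x)‖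
                * (B * ((1 - lam ^ n) / (1 - lam)) * ‖fderiv ℝ (S.wmap u) x‖ * ‖x - y‖ ^ A)
              = B * ((1 - lam ^ n) / (1 - lam))
                * (‖fderiv ℝ (S.φ i) (S.wmap u x)‖ * ‖fderiv ℝ (S.wmap u) x‖) * ‖x - y‖ ^ A)
            have h2 := hT2.trans_eq (by ring :
              B * lam ^ n * ‖fderiv ℝ (S.φ i) (S.wmap u x)‖
                * ‖fderiv ℝ (S.wmap u) x‖ * ‖x - y‖ ^ A
              = B * lam ^ n * (‖fderiv ℝ (S.φ i) (S.wmap u x)‖ * ‖fderiv ℝ (S.wmap u) x‖)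
                * ‖x - y‖ ^ A)
            nlinarith [this, h2]
        _ = B * ((1 - lam ^ (i :: u).length) / (1 - lam))
              * ‖fderiv ℝ (S.wmap (i :: u)) x‖ * ‖x - y‖ ^ A := by
            rw [hnormmul i u x hxΩ, List.length_cons]
            have hid : (1 - lam ^ n) / (1 - lam) + lam ^ n
                = (1 - lam ^ (n + 1)) / (1 - lam) := by
              field_simp
              ring
            rw [hid]
  -- conclusion
  refine ⟨A, B / (1 - lam), hA0, by positivity, ?_⟩
  intro w x hx y hy
  have h1 := hP1 w x (subset_closure hx) y (subset_closure hy)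
  have h2 : B * ((1 - lam ^ w.length) / (1 - lam)) * ‖fderiv ℝ (S.wmap w) x‖
      ≤ B / (1 - lam) * S.dnorm w := by
    have h3 : ‖fderiv ℝ (S.wmap w) x‖ ≤ S.dnorm w :=
      hdnorm w x (hVΩ (subset_closure hx))
    have h4 : (1 - lam ^ w.length) / (1 - lam) ≤ 1 / (1 - lam) := by
      apply (div_le_div_iff_of_pos_right h1lam).2
      have := (pow_pos hlam0 w.length).le
      linarith
    have h5 : (0:ℝ) ≤ (1 - lam ^ w.length) / (1 - lam) := by
      apply div_nonneg _ h1lam.le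
      have h6 : lam ^ w.length ≤ 1 := pow_le_one₀ hlam0.le hlam1.le
      linarith
    have h7 : B * ((1 - lam ^ w.length) / (1 - lam)) ≤ B / (1 - lam) := by
      calc B * ((1 - lam ^ w.length) / (1 - lam)) ≤ B * (1 / (1 - lam)) :=
            mul_le_mul_of_nonneg_left h4 hB0.le
        _ = B / (1 - lam) := mul_one_div B _
    exact mul_le_mul h7 h3 (norm_nonneg _) (by positivity)
  calc ‖fderiv ℝ (S.wmap w) x - fderiv ℝ (S.wmap w) y‖
      ≤ B * ((1 - lam ^ w.length) / (1 - lam)) * ‖fderiv ℝ (S.wmap w) x‖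
        * ‖x - y‖ ^ A := h1
    _ ≤ B / (1 - lam) * S.dnorm w * ‖x - y‖ ^ A :=
        mul_le_mul_of_nonneg_right h2 (Real.rpow_nonneg (norm_nonneg _) _)

end
end
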